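/- arXiv:0810.5598 — 3 statements merged into one kernel-verified Lean document; each statement's English description precedes it below -/
import Mathlib

section
/- Let W be a complex inner product space carrying a Clifford system c_1, …, c_n, and let v_1, …, v_n ∈ W satisfy the equality ‖∑_{i=1}^n c_i(v_i)‖² = n · ∑_{i=1}^n ‖v_i‖². Then c_1(v_1) = c_2(v_2) = ⋯ = c_n(v_n), and consequently v_i = −(1/n) · c_i(∑_{j=1}^n c_j(v_j)) for every i = 1, …, n. -/
open scoped ComplexInnerProductSpace

/-!
Each `c i` squares to `-1` and is skew-adjoint, hence an isometry, so the hypothesis reads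
`‖∑ xᵢ‖² = n ∑ ‖xᵢ‖²` for `xᵢ = c i (v i)`. The Lagrange-type identity
`∑ᵢ ∑ⱼ ‖xᵢ - xⱼ‖² = 2 (n ∑ ‖xᵢ‖² - ‖∑ xᵢ‖²)` then forces all `xᵢ` to be equal, so
`∑ⱼ c j (v j) = n • c i (v i)`, and applying `c i` gives the formula for `v i`.
-/

open Finset

section InnerProductSpace

variable {E ι : Type*} [NormedAddCommGroup E] [Fintype ι]

theorem norm_sum_sq_eq_sum_sum_re_inner (𝕜 : Type*) [RCLike 𝕜] [InnerProductSpace 𝕜 E]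
    (x : ι → E) : ‖∑ i, x i‖ ^ 2 = ∑ i, ∑ j, RCLike.re (inner 𝕜 (x i) (x j)) := by
  rw [@norm_sq_eq_re_inner 𝕜, sum_inner, map_sum]
  simp only [inner_sum, map_sum]

theorem sum_sum_norm_sub_sq (𝕜 : Type*) [RCLike 𝕜] [InnerProductSpace 𝕜 E] (x : ι → E) :
    ∑ i, ∑ j, ‖x i - x j‖ ^ 2 =
      2 * (Fintype.card ι * ∑ i, ‖x i‖ ^ 2 - ‖∑ i, x i‖ ^ 2) := by
  simp only [@norm_sub_sq 𝕜, norm_sum_sq_eq_sum_sum_re_inner 𝕜, sum_add_distrib,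
    sum_sub_distrib, sum_const, card_univ, nsmul_eq_mul, ← mul_sum]
  ring

theorem eq_of_norm_sum_sq_eq_card_mul_sum_norm_sq (𝕜 : Type*) [RCLike 𝕜] [InnerProductSpace 𝕜 E]
    (x : ι → E)
    (h : ‖∑ i, x i‖ ^ 2 = Fintype.card ι * ∑ i, ‖x i‖ ^ 2) (i j : ι) : x i = x j := by
  have hzero : ∑ i, ∑ j, ‖x i - x j‖ ^ 2 = 0 := by
    rw [sum_sum_norm_sub_sq 𝕜, h, sub_self, mul_zero]
  have hij := (sum_eq_zero_iff_of_nonneg fun _ _ => sum_nonneg fun _ _ => sq_nonneg _).1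
    hzero i (mem_univ i)
  have hxij := (sum_eq_zero_iff_of_nonneg fun _ _ => sq_nonneg _).1 hij j (mem_univ j)
  rwa [sq_eq_zero_iff, norm_eq_zero, sub_eq_zero] at hxij

theorem norm_apply_eq_of_skew_of_apply_apply_eq_neg {𝕜 : Type*} [RCLike 𝕜]
    [InnerProductSpace 𝕜 E] (f : E →ₗ[𝕜] E)
    (hskew : ∀ v w, inner 𝕜 (f v) w = -inner 𝕜 v (f w)) (hsq : ∀ w, f (f w) = -w) (w : E) :
    ‖f w‖ = ‖w‖ := by
  have : inner 𝕜 (f w) (f w) = inner 𝕜 w w := by rw [hskew, hsq, inner_neg_right, neg_neg]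
  rw [@norm_eq_sqrt_re_inner 𝕜, @norm_eq_sqrt_re_inner 𝕜 E, this]

end InnerProductSpace

theorem clifford_cauchy_schwarz_equality_general
    {W : Type*} [NormedAddCommGroup W] [InnerProductSpace ℂ W]
    {n : ℕ}
    (c : Fin n → W →ₗ[ℂ] W)
    (hcliff : ∀ i j : Fin n, ∀ v : W,
      c i (c j v) + c j (c i v) = if i = j then (-2 : ℂ) • v else 0)
    (hskew : ∀ i : Fin n, ∀ v w : W, ⟪c i v, w⟫ = -⟪v, c i w⟫)
    (v : Fin n → W)
    (heq : ‖∑ i, c i (v i)‖ ^ 2 = (n : ℝ) * ∑ i, ‖v i‖ ^ 2) :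
    (∀ i j : Fin n, c i (v i) = c j (v j)) ∧
      ∀ i : Fin n, v i = -((1 : ℂ) / n) • c i (∑ j, c j (v j)) := by
  have hsq (i : Fin n) (w : W) : c i (c i w) = -w := by
    have h := hcliff i i w
    rw [if_pos rfl, ← two_smul ℂ, neg_smul, ← smul_neg] at h
    exact smul_right_injective W two_ne_zero h
  have hnorm (i : Fin n) : ‖c i (v i)‖ = ‖v i‖ :=
    norm_apply_eq_of_skew_of_apply_apply_eq_neg (c i) (hskew i) (hsq i) (v i)
  have hall : ∀ i j : Fin n, c i (v i) = c j (v j) :=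
    eq_of_norm_sum_sq_eq_card_mul_sum_norm_sq ℂ (fun i => c i (v i))
      (by simpa only [Fintype.card_fin, hnorm] using heq)
  refine ⟨hall, fun i => ?_⟩
  have hsum : ∑ j, c j (v j) = (n : ℂ) • c i (v i) := by
    rw [sum_congr rfl fun j _ => hall j i, sum_const, card_univ, Fintype.card_fin,
      Nat.cast_smul_eq_nsmul]
  have hn : (n : ℂ) ≠ 0 := Nat.cast_ne_zero.2 (Fin.pos i).ne'
  rw [hsum, map_smul, hsq, smul_neg, smul_neg, neg_smul, neg_neg, smul_smul,
    div_mul_cancel₀ 1 hn, one_smul]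

/-- **Equality case of the Cauchy–Schwarz estimate for Clifford systems.**
If `c 1, …, c n` is a Clifford system on a complex inner product space `W` and
`v 1, …, v n ∈ W` satisfy `‖∑ i, c i (v i)‖² = n · ∑ i, ‖v i‖²`, then all the
`c i (v i)` coincide, and consequently `v i = -(1/n) • c i (∑ j, c j (v j))` for
every `i`. -/
theorem clifford_cauchy_schwarz_equality
    {W : Type*} [NormedAddCommGroup W] [InnerProductSpace ℂ W]
    {n : ℕ} (hn : 1 ≤ n)
    (c : Fin n → W →ₗ[ℂ] W)
    (hcliff : ∀ i j : Fin n, ∀ v : W,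
      c i (c j v) + c j (c i v) = if i = j then (-2 : ℂ) • v else 0)
    (hskew : ∀ i : Fin n, ∀ v w : W, ⟪c i v, w⟫ = -⟪v, c i w⟫)
    (v : Fin n → W)
    (heq : ‖∑ i, c i (v i)‖ ^ 2 = (n : ℝ) * ∑ i, ‖v i‖ ^ 2) :
    (∀ i j : Fin n, c i (v i) = c j (v j)) ∧
      ∀ i : Fin n, v i = -((1 : ℂ) / n) • c i (∑ j, c j (v j)) :=
  clifford_cauchy_schwarz_equality_general c hcliff hskew v heq
end

section
/- Fix L > 0 and a unit vector ψ_0 ∈ ℂ², and define u : ℝ² → ℂ² by u(θ, t) = sin(πt/L)·ψ_0 and Du = c_1·∂_θ u + c_2·∂_t u with the flat planar Dirac operator. Then u(θ, 0) = u(θ, L) = 0 for all θ, the identity ∫_0^{2π} ∫_0^L ‖Du(θ,t)‖² dt dθ = (π²/L²) · ∫_0^{2π} ∫_0^L ‖u(θ,t)‖² dt dθ holds, and the Rayleigh quotient π²/L² satisfies π²/L² < 4π/(2πL) if and only if L > π²/2. (This shows the bound λ_*(D²) ≥ 4π/area fails on the cylinder S¹ × (0, L) of circumference 2π and area 2πL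 when the spin structure is not bounding at infinity, since u descends to a spinor for the non-bounding spin structure.) -/
open Real intervalIntegral

/-!
The spinor `u` depends on `t` alone, so `Du = (π/L) cos(πt/L) • c₂ψ₀`. Skewness together with
`c₂² = -1` makes `c₂` an isometry, hence `‖Du‖² = (π/L)² cos²(πt/L)` and `‖u‖² = sin²(πt/L)`;
both `sin²` and `cos²` of `πt/L` integrate to `L/2` over `(0, L)`.
-/

theorem norm_apply_eq_of_inner_skew_of_apply_apply_eq_neg {𝕜 E : Type*} [RCLike 𝕜]
    [NormedAddCommGroup E] [InnerProductSpace 𝕜 E] (A : E → E) {v : E}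
    (hskew : ∀ v w, inner 𝕜 (A v) w = -inner 𝕜 v (A w)) (hsq : A (A v) = -v) :
    ‖A v‖ = ‖v‖ := by
  have hinner : inner 𝕜 (A v) (A v) = inner 𝕜 v v := by
    rw [hskew, hsq, inner_neg_right, neg_neg]
  rw [inner_self_eq_norm_sq_to_K, inner_self_eq_norm_sq_to_K] at hinner
  exact (pow_left_inj₀ (norm_nonneg _) (norm_nonneg _) two_ne_zero).1 (by exact_mod_cast hinner)

theorem fderiv_smul_comp_snd_apply {F : Type*} [NormedAddCommGroup F] [NormedSpace ℝ F]
    {g : ℝ → ℝ} {g' : ℝ} (ψ : F) {p : ℝ × ℝ} (hg : HasDerivAt g g' p.2) (v : ℝ × ℝ) :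
    fderiv ℝ (fun q : ℝ × ℝ => g q.2 • ψ) p v = (g' * v.2) • ψ := by
  have hderiv : HasFDerivAt (fun q : ℝ × ℝ => g q.2 • ψ)
      ((g' • ContinuousLinearMap.snd ℝ ℝ ℝ).smulRight ψ) p :=
    (hg.comp_hasFDerivAt p hasFDerivAt_snd).smul_const ψ
  simp [hderiv.fderiv]

theorem integral_sin_sq_pi_mul_div {L : ℝ} (hL : L ≠ 0) :
    ∫ t in (0:ℝ)..L, sin (π * t / L) ^ 2 = L / 2 := by
  simp_rw [mul_div_right_comm π]
  rw [integral_comp_mul_left (fun x => sin x ^ 2) (div_ne_zero pi_ne_zero hL), integral_sin_sq,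
    mul_zero, div_mul_cancel₀ π hL]
  simp only [sin_zero, sin_pi, zero_mul, sub_self, zero_add, sub_zero, smul_eq_mul]
  field_simp

theorem integral_cos_sq_pi_mul_div {L : ℝ} (hL : L ≠ 0) :
    ∫ t in (0:ℝ)..L, cos (π * t / L) ^ 2 = L / 2 := by
  simp_rw [mul_div_right_comm π]
  rw [integral_comp_mul_left (fun x => cos x ^ 2) (div_ne_zero pi_ne_zero hL), integral_cos_sq,
    mul_zero, div_mul_cancel₀ π hL]
  simp only [sin_zero, sin_pi, mul_zero, sub_self, zero_add, sub_zero, smul_eq_mul]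
  field_simp

theorem pi_sq_div_sq_lt_four_pi_div_iff {L : ℝ} (hL : 0 < L) :
    π ^ 2 / L ^ 2 < 4 * π / (2 * π * L) ↔ π ^ 2 / 2 < L := by
  have hbound : 4 * π / (2 * π * L) = 2 / L := by field_simp; ring
  rw [hbound, div_lt_div_iff₀ (by positivity) hL]
  constructor <;> intro <;> nlinarith

/-- **Counterexample on the cylinder with non-bounding spin structure.**
Fix `L > 0` and a unit spinor `ψ₀ ∈ ℂ²`, and let `u(θ,t) = sin(πt/L)·ψ₀` with
`Du = c₁∂_θ u + c₂∂_t u` the flat planar Dirac operator. Then `u` vanishes on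
`t = 0` and `t = L`, its Rayleigh quotient identity
`∫₀^{2π}∫₀^L ‖Du‖² = (π²/L²)·∫₀^{2π}∫₀^L ‖u‖²` holds, and
`π²/L² < 4π/(2πL)` iff `L > π²/2`. Hence the bound `λ_*(D²) ≥ 4π/area` fails on the
cylinder `S¹ × (0,L)` (area `2πL`) whenever `L > π²/2`. -/
theorem cylinder_counterexample
    (c : Fin 2 → EuclideanSpace ℂ (Fin 2) →L[ℂ] EuclideanSpace ℂ (Fin 2))
    (hcliff : ∀ i j : Fin 2, ∀ v : EuclideanSpace ℂ (Fin 2),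
      c i (c j v) + c j (c i v) = if i = j then (-2 : ℂ) • v else 0)
    (hskew : ∀ i : Fin 2, ∀ v w : EuclideanSpace ℂ (Fin 2),
      @inner ℂ _ _ (c i v) w = -@inner ℂ _ _ v (c i w))
    (L : ℝ) (hL : 0 < L)
    (ψ₀ : EuclideanSpace ℂ (Fin 2)) (hψ₀ : ‖ψ₀‖ = 1)
    (u : ℝ × ℝ → EuclideanSpace ℂ (Fin 2))
    (hu : ∀ p : ℝ × ℝ, u p = (Real.sin (π * p.2 / L) : ℂ) • ψ₀)
    (Du : ℝ × ℝ → EuclideanSpace ℂ (Fin 2))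
    (hDu : ∀ p : ℝ × ℝ, Du p
      = c 0 (fderiv ℝ u p (1, 0)) + c 1 (fderiv ℝ u p (0, 1))) :
    (∀ θ : ℝ, u (θ, 0) = 0 ∧ u (θ, L) = 0) ∧
      (∫ θ in (0:ℝ)..(2 * π), ∫ t in (0:ℝ)..L, ‖Du (θ, t)‖ ^ 2)
        = (π ^ 2 / L ^ 2) * ∫ θ in (0:ℝ)..(2 * π), ∫ t in (0:ℝ)..L, ‖u (θ, t)‖ ^ 2 ∧
      (π ^ 2 / L ^ 2 < 4 * π / (2 * π * L) ↔ π ^ 2 / 2 < L) := by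
  have hc1_sq : c 1 (c 1 ψ₀) = -ψ₀ := by
    have hcliff11 := hcliff 1 1 ψ₀
    rw [if_pos rfl] at hcliff11
    linear_combination (norm := module) (1 / 2 : ℂ) • hcliff11
  have hc1_norm : ‖c 1 ψ₀‖ = 1 :=
    (norm_apply_eq_of_inner_skew_of_apply_apply_eq_neg (c 1) (hskew 1) hc1_sq).trans hψ₀
  have hu_real : u = fun q => sin (π * q.2 / L) • ψ₀ := funext fun q => by rw [hu, Complex.coe_smul]
  have hsin_deriv (t : ℝ) : HasDerivAt (fun t => sin (π * t / L)) (cos (π * t / L) * (π / L)) t := by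
    simpa using (((hasDerivAt_id t).const_mul π).div_const L).sin
  have hDu_eq (p : ℝ × ℝ) : Du p = (cos (π * p.2 / L) * (π / L)) • c 1 ψ₀ := by
    simp [hDu, hu_real, fderiv_smul_comp_snd_apply ψ₀ (hsin_deriv p.2)]
  have hu_norm (θ t : ℝ) : ‖u (θ, t)‖ ^ 2 = sin (π * t / L) ^ 2 := by
    simp [hu_real, norm_smul, hψ₀]
  have hDu_norm (θ t : ℝ) : ‖Du (θ, t)‖ ^ 2 = (π / L) ^ 2 * cos (π * t / L) ^ 2 := by
    rw [hDu_eq, norm_smul, hc1_norm, mul_one, norm_eq_abs, sq_abs]; ring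
  refine ⟨fun θ => ⟨by simp [hu], by simp [hu, hL.ne']⟩, ?_, pi_sq_div_sq_lt_four_pi_div_iff hL⟩
  simp only [hu_norm, hDu_norm, integral_const_mul, integral_sin_sq_pi_mul_div hL.ne',
    integral_cos_sq_pi_mul_div hL.ne', integral_const, smul_eq_mul]
  ring
end

section
/- For an integer k ≥ 1 let f_k(θ, φ) = cos θ · cos(φ/k) on R_k = (−π/2, π/2) × (0, 2kπ), with the area measure dA = cos θ dθ dφ. Then: (i) ∫_{R_k} f_k dA = 0; (ii) ∫_{R_k} f_k² dA = 4kπ/3; (iii) ∫_{R_k} ((∂_θ f_k)² + cos^{−2}θ · (∂_φ f_k)²) dA = kπ·(2/3 + 2/k²); hence the Rayleigh quotient of f_k equals 2 − (3/2)(1 − 1/k²) = 1/2 + 3/(2k²), which is strictly less than 2 for every k ≥ 2. (Thus the Lichnerowicz bound λ_1(Δ) ≥ nκ/(n−1) = 2 for Ricci curvature ≥ 1 in dimension 2 is violated on the incomplete surface M_k for k ≥ 2, even by a test function orthogonal to the constants.) -/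
open Real intervalIntegral

/-!
Separation of variables: each integral is an iterated integral whose inner `φ`-integral runs
over `k` periods of `cos (φ / k)`, which the substitution `φ = k ψ` reduces to one period, so
`∫ cos (φ/k) = 0` and `∫ cos² (φ/k) = ∫ sin² (φ/k) = kπ`. The factor `cos θ` of `∂_φ f_k`
cancels the `cos⁻² θ` of the metric, so the energy density is
`(sin² θ cos² (φ/k) + k⁻² sin² (φ/k)) cos θ`; then `∫ cos³ θ = 4/3`, `∫ sin² θ cos θ = 2/3`
and `∫ cos θ = 2` over `(-π/2, π/2)`.
-/

theorem integral_comp_div_over_periods {c : ℝ} (hc : c ≠ 0) (g : ℝ → ℝ) :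
    ∫ φ in (0 : ℝ)..(2 * c * π), g (φ / c) = c * ∫ φ in (0 : ℝ)..(2 * π), g φ := by
  rw [integral_comp_div g hc, zero_div, show 2 * c * π / c = 2 * π by field_simp, smul_eq_mul]

theorem integral_cos_div_over_periods {c : ℝ} (hc : c ≠ 0) :
    ∫ φ in (0 : ℝ)..(2 * c * π), cos (φ / c) = 0 := by
  simp [integral_comp_div_over_periods hc cos]

theorem integral_cos_div_sq_over_periods {c : ℝ} (hc : c ≠ 0) :
    ∫ φ in (0 : ℝ)..(2 * c * π), cos (φ / c) ^ 2 = c * π := by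
  simp [integral_comp_div_over_periods hc (fun x => cos x ^ 2), integral_cos_sq]

theorem integral_sin_div_sq_over_periods {c : ℝ} (hc : c ≠ 0) :
    ∫ φ in (0 : ℝ)..(2 * c * π), sin (φ / c) ^ 2 = c * π := by
  simp [integral_comp_div_over_periods hc (fun x => sin x ^ 2), integral_sin_sq]

theorem integral_mul_cos_div_sq_add_mul_sin_div_sq_over_periods {c : ℝ} (hc : c ≠ 0)
    (A B : ℝ) :
    ∫ φ in (0 : ℝ)..(2 * c * π), (A * cos (φ / c) ^ 2 + B * sin (φ / c) ^ 2)
      = (A + B) * (c * π) := by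
  rw [integral_add ((by fun_prop : Continuous _).intervalIntegrable _ _)
      ((by fun_prop : Continuous _).intervalIntegrable _ _),
    integral_const_mul, integral_const_mul, integral_cos_div_sq_over_periods hc,
    integral_sin_div_sq_over_periods hc]
  ring

theorem hasDerivAt_cos_div (c x : ℝ) :
    HasDerivAt (fun s => cos (s / c)) (-sin (x / c) * (1 / c)) x := by
  simpa [Function.comp_def] using (hasDerivAt_cos (x / c)).comp x ((hasDerivAt_id x).div_const c)

theorem energy_density_cos_mul_cos_div (c θ φ : ℝ) :
    ((deriv (fun s => cos s * cos (φ / c)) θ) ^ 2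
        + (1 / cos θ ^ 2) * (deriv (fun s => cos θ * cos (s / c)) φ) ^ 2) * cos θ
      = sin θ ^ 2 * cos θ * cos (φ / c) ^ 2 + cos θ / c ^ 2 * sin (φ / c) ^ 2 := by
  rw [((hasDerivAt_cos θ).mul_const (cos (φ / c))).deriv,
    ((hasDerivAt_cos_div c φ).const_mul (cos θ)).deriv]
  -- at `cos θ = 0` both sides vanish, whatever the junk value of `1 / cos θ ^ 2`
  rcases eq_or_ne (cos θ) 0 with h | h
  · simp [h]
  · field_simp

theorem integral_integral_cos_mul_cos_div_mul_cos {c : ℝ} (hc : c ≠ 0) (a b : ℝ) :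
    ∫ θ in a..b, ∫ φ in (0 : ℝ)..(2 * c * π), cos θ * cos (φ / c) * cos θ = 0 := by
  simp [integral_const_mul, integral_cos_div_over_periods hc]

theorem integral_integral_sq_cos_mul_cos_div_mul_cos {c : ℝ} (hc : c ≠ 0) :
    ∫ θ in (-(π / 2))..(π / 2), ∫ φ in (0 : ℝ)..(2 * c * π), (cos θ * cos (φ / c)) ^ 2 * cos θ
      = 4 * c * π / 3 := by
  have hinner (θ : ℝ) :
      ∫ φ in (0 : ℝ)..(2 * c * π), (cos θ * cos (φ / c)) ^ 2 * cos θ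
        = cos θ ^ 3 * (c * π) := by
    rw [← integral_cos_div_sq_over_periods hc, ← integral_const_mul]
    exact integral_congr fun φ _ => by ring
  simp only [hinner, integral_mul_const, integral_cos_pow_three, sin_neg, sin_pi_div_two]
  ring

theorem integral_integral_energy_cos_mul_cos_div {c : ℝ} (hc : c ≠ 0) :
    ∫ θ in (-(π / 2))..(π / 2), ∫ φ in (0 : ℝ)..(2 * c * π),
        ((deriv (fun s => cos s * cos (φ / c)) θ) ^ 2
          + (1 / cos θ ^ 2) * (deriv (fun s => cos θ * cos (s / c)) φ) ^ 2) * cos θ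
      = c * π * (2 / 3 + 2 / c ^ 2) := by
  simp only [energy_density_cos_mul_cos_div,
    integral_mul_cos_div_sq_add_mul_sin_div_sq_over_periods hc, integral_mul_const]
  rw [integral_add ((by fun_prop : Continuous _).intervalIntegrable _ _)
      ((by fun_prop : Continuous _).intervalIntegrable _ _),
    integral_sin_sq_mul_cos, integral_div, integral_cos]
  simp only [sin_neg, sin_pi_div_two]
  field_simp
  ring

/-- **Violation of the Lichnerowicz bound on the incomplete surface `M_k`.**
For `k ≥ 1` let `f_k(θ,φ) = cos θ · cos(φ/k)` on `R_k = (-π/2, π/2) × (0, 2kπ)`, with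
area measure `cos θ dθ dφ`. Then `∫ f_k dA = 0`, `∫ f_k² dA = 4kπ/3`,
`∫ (∂_θ f_k)² + cos⁻²θ (∂_φ f_k)² dA = kπ(2/3 + 2/k²)`, and the Rayleigh quotient
equals `2 − (3/2)(1 − 1/k²) = 1/2 + 3/(2k²)`, which is `< 2` for every `k ≥ 2`. -/
theorem lichnerowicz_violation_Mk
    (k : ℕ) (hk : 1 ≤ k)
    (f : ℝ → ℝ → ℝ)
    (hf : ∀ θ φ : ℝ, f θ φ = cos θ * cos (φ / k)) :
    (∫ θ in (-(π / 2))..(π / 2), ∫ φ in (0 : ℝ)..(2 * k * π), f θ φ * cos θ) = 0 ∧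
    (∫ θ in (-(π / 2))..(π / 2), ∫ φ in (0 : ℝ)..(2 * k * π), (f θ φ) ^ 2 * cos θ)
        = 4 * k * π / 3 ∧
    (∫ θ in (-(π / 2))..(π / 2), ∫ φ in (0 : ℝ)..(2 * k * π),
        ((deriv (fun s => f s φ) θ) ^ 2
          + (1 / cos θ ^ 2) * (deriv (fun s => f θ s) φ) ^ 2) * cos θ)
        = k * π * (2 / 3 + 2 / (k : ℝ) ^ 2) ∧
    (k * π * (2 / 3 + 2 / (k : ℝ) ^ 2)) / (4 * k * π / 3)
        = 2 - (3 / 2) * (1 - 1 / (k : ℝ) ^ 2) ∧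
    2 - (3 / 2) * (1 - 1 / (k : ℝ) ^ 2) = 1 / 2 + 3 / (2 * (k : ℝ) ^ 2) ∧
    (2 ≤ k → 1 / 2 + 3 / (2 * (k : ℝ) ^ 2) < 2) := by
  obtain rfl : f = fun θ φ => cos θ * cos (φ / k) := funext fun θ => funext (hf θ)
  have hk0 : (k : ℝ) ≠ 0 := Nat.cast_ne_zero.mpr (Nat.one_le_iff_ne_zero.mp hk)
  refine ⟨integral_integral_cos_mul_cos_div_mul_cos hk0 _ _,
    integral_integral_sq_cos_mul_cos_div_mul_cos hk0,
    integral_integral_energy_cos_mul_cos_div hk0, by field_simp; ring, by ring, fun h2 => ?_⟩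
  have hk2 : (4 : ℝ) ≤ (k : ℝ) ^ 2 := by
    have : (2 : ℝ) ≤ k := by exact_mod_cast h2
    nlinarith
  have : 3 / (2 * (k : ℝ) ^ 2) ≤ 3 / 8 := by
    rw [div_le_div_iff₀ (by positivity) (by norm_num)]
    linarith
  linarith
end
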